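/- Let I be an index set, R_i a commutative ring and M_i an R_i-module for each i ∈ I, R = ∏_i R_i, and E ⊆ R a multiplicative subset each of whose elements has all but finitely many components equal to 1, with each M_i E-torsion free (every component of every element of E acts injectively on M_i). Let Ē_i ⊆ R_i denote the image of E under the projection R → R_i. Then there is a short exact sequence 0 → ∏_i M_i → E^{-1}(∏_i M_i) → ⊕_i (Ē_i^{-1}M_i)/M_i → 0, i.e. the cokernel of the localization map ∏_i M_i → E^{-1}(∏_i M_i) is isomorphic to the direct sum over i of the cokernels of the componentwise localization maps M_i → Ē_i^{-1}M_i. -/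

import Mathlib

/-! The map `m / e ↦ (mᵢ / eᵢ)ᵢ` from `E⁻¹(∏ Mᵢ)` to `∏ (Ēᵢ⁻¹Mᵢ)/Mᵢ` lands in the direct sum,
because `eᵢ = 1` for almost all `i`. It is onto: the class of `m / eᵢ` in the `i`-th summand is
the image of `Pi.single i m / e`. Since every element of `Ēᵢ` acts injectively on `Mᵢ`, the class
of `mᵢ / eᵢ` vanishes iff `eᵢ` divides `mᵢ`; so `m / e` lies in the kernel iff `m = e • n` for some
`n`, i.e. iff `m / e = n / 1` comes from `∏ Mᵢ`. -/

open scoped DirectSum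

section

variable {ι : Type} (Rf : ι → Type) [∀ i, CommRing (Rf i)]
  (Mf : ι → Type) [∀ i, AddCommGroup (Mf i)] [∀ i, Module (Rf i) (Mf i)]

/-- Each `Rᵢ`-module is a module over the product ring `∏ i, R i` via the `i`-th
projection. -/
noncomputable local instance moduleOfProj (N : ι → Type) [∀ i, AddCommGroup (N i)]
    [∀ i, Module (Rf i) (N i)] (i : ι) : Module (∀ j, Rf j) (N i) :=
  Module.compHom (N i) (Pi.evalRingHom Rf i)

variable (E : Submonoid (∀ i, Rf i))

/-- The image `Ē_i` of `E` in `R_i` under the `i`-th projection. -/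
def Ebar (i : ι) : Submonoid (Rf i) := E.map (Pi.evalRingHom Rf i).toMonoidHom

/-- The cokernel of the localization map `M_i → Ē_i⁻¹ M_i`, an `R_i`-module. -/
abbrev LocCoker (i : ι) : Type :=
  LocalizedModule (Ebar Rf E i) (Mf i) ⧸
    LinearMap.range (LocalizedModule.mkLinearMap (Ebar Rf E i) (Mf i))

namespace LocalizedModule

variable {R M : Type*} [CommSemiring R] {S : Submonoid R} [AddCommMonoid M] [Module R M]

theorem mk_mem_range_mkLinearMap_iff (hS : ∀ s : S, IsSMulRegular M s) (m : M) (s : S) :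
    mk m s ∈ LinearMap.range (mkLinearMap S M) ↔ ∃ n : M, s • n = m := by
  constructor
  · rintro ⟨n, hn⟩
    obtain ⟨u, hu⟩ := mk_eq.mp hn
    exact ⟨n, hS u (by rwa [one_smul] at hu)⟩
  · rintro ⟨n, rfl⟩
    exact ⟨n, mk_eq.mpr ⟨1, by simp only [one_smul]⟩⟩

end LocalizedModule

namespace LinearMap

variable {R M κ : Type*} {N : κ → Type*} [Semiring R] [AddCommMonoid M] [Module R M]
  [∀ k, AddCommMonoid (N k)] [∀ k, Module R (N k)]

noncomputable def toDirectSum (f : ∀ k, M →ₗ[R] N k) (hf : ∀ x, {k | f k x ≠ 0}.Finite) :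
    M →ₗ[R] ⨁ k, N k where
  toFun x :=
    { toFun := fun k => f k x
      support' := Trunc.mk ⟨(hf x).toFinset.val,
        fun _ => or_iff_not_imp_right.2 (hf x).mem_toFinset.2⟩ }
  map_add' x y := DFinsupp.ext fun k => map_add (f k) x y
  map_smul' r x := DFinsupp.ext fun k => map_smul (f k) r x

@[simp]
theorem toDirectSum_apply (f : ∀ k, M →ₗ[R] N k) (hf : ∀ x, {k | f k x ≠ 0}.Finite) (x : M)
    (k : κ) : toDirectSum f hf x k = f k x :=
  rfl

end LinearMap

theorem apply_mem_Ebar {e : ∀ i, Rf i} (he : e ∈ E) (i : ι) : e i ∈ Ebar Rf E i :=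
  Submonoid.mem_map_of_mem _ he

theorem isSMulRegular_of_mem_Ebar
    (htf : ∀ e ∈ E, ∀ i, Function.Injective (fun m : Mf i => e i • m)) (i : ι)
    (s : Ebar Rf E i) : IsSMulRegular (Mf i) s := by
  obtain ⟨_, e, he, rfl⟩ := s
  exact htf e he i

theorem isSMulRegular_pi (htf : ∀ e ∈ E, ∀ i, Function.Injective (fun m : Mf i => e i • m))
    (e : E) : IsSMulRegular (∀ i, Mf i) e :=
  IsSMulRegular.pi fun i => htf e e.2 i

noncomputable def evalLocalized (i : ι) :
    LocalizedModule E (∀ i, Mf i) →ₛₗ[Pi.evalRingHom Rf i]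
      LocalizedModule (Ebar Rf E i) (Mf i) where
  toFun x := x.liftOn (fun p => .mk (p.1 i) ⟨p.2.1 i, apply_mem_Ebar Rf E p.2.2 i⟩) <| by
    rintro ⟨m, e⟩ ⟨m', e'⟩ ⟨u, hu⟩
    exact LocalizedModule.mk_eq.mpr ⟨⟨u.1 i, apply_mem_Ebar Rf E u.2 i⟩, congrFun hu i⟩
  map_add' x y := by
    induction x, y using LocalizedModule.induction_on₂ with
    | h m m' e e' =>
      simp only [LocalizedModule.mk_add_mk, LocalizedModule.liftOn_mk]
      rfl
  map_smul' r x := by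
    induction x using LocalizedModule.induction_on with
    | h m e =>
      simp only [LocalizedModule.smul'_mk, LocalizedModule.liftOn_mk]
      rfl

theorem evalLocalized_mk (i : ι) (m : ∀ i, Mf i) (e : E) :
    evalLocalized Rf Mf E i (.mk m e) = .mk (m i) ⟨e.1 i, apply_mem_Ebar Rf E e.2 i⟩ := by
  simp only [evalLocalized, LinearMap.coe_mk, AddHom.coe_mk, LocalizedModule.liftOn_mk]

noncomputable def toLocCoker (i : ι) :
    LocalizedModule E (∀ i, Mf i) →ₗ[∀ j, Rf j] LocCoker Rf Mf E i where
  toFun x := Submodule.Quotient.mk (evalLocalized Rf Mf E i x)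
  map_add' x y := by rw [map_add, Submodule.Quotient.mk_add]
  map_smul' r x := by rw [LinearMap.map_smulₛₗ, Submodule.Quotient.mk_smul]; rfl

theorem toLocCoker_mk (i : ι) (m : ∀ i, Mf i) (e : E) :
    toLocCoker Rf Mf E i (.mk m e) =
      Submodule.Quotient.mk (.mk (m i) ⟨e.1 i, apply_mem_Ebar Rf E e.2 i⟩) :=
  congrArg _ (evalLocalized_mk Rf Mf E i m e)

theorem finite_toLocCoker_ne_zero (hone : ∀ e ∈ E, {i | e i ≠ 1}.Finite)
    (x : LocalizedModule E (∀ i, Mf i)) : {i | toLocCoker Rf Mf E i x ≠ 0}.Finite := by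
  induction x using LocalizedModule.induction_on with
  | h m e =>
    refine (hone e e.2).subset fun i hi he => hi ?_
    have he_one : (⟨e.1 i, apply_mem_Ebar Rf E e.2 i⟩ : Ebar Rf E i) = 1 := Subtype.ext he
    rw [toLocCoker_mk, he_one, Submodule.Quotient.mk_eq_zero]
    exact LinearMap.mem_range_self _ (m i)

noncomputable def toSumLocCoker (hone : ∀ e ∈ E, {i | e i ≠ 1}.Finite) :
    LocalizedModule E (∀ i, Mf i) →ₗ[∀ j, Rf j] ⨁ i, LocCoker Rf Mf E i :=
  LinearMap.toDirectSum (toLocCoker Rf Mf E) (finite_toLocCoker_ne_zero Rf Mf E hone)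

theorem ker_toSumLocCoker (hone : ∀ e ∈ E, {i | e i ≠ 1}.Finite)
    (htf : ∀ e ∈ E, ∀ i, Function.Injective (fun m : Mf i => e i • m)) :
    LinearMap.ker (toSumLocCoker Rf Mf E hone) =
      LinearMap.range (LocalizedModule.mkLinearMap E (∀ i, Mf i)) := by
  ext x
  induction x using LocalizedModule.induction_on with
  | h m e =>
    rw [LinearMap.mem_ker, LocalizedModule.mk_mem_range_mkLinearMap_iff
      (isSMulRegular_pi Rf Mf E htf)]
    simp only [DirectSum.ext_iff, toSumLocCoker, LinearMap.toDirectSum_apply, toLocCoker_mk,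
      DirectSum.zero_apply, Submodule.Quotient.mk_eq_zero,
      LocalizedModule.mk_mem_range_mkLinearMap_iff (isSMulRegular_of_mem_Ebar Rf Mf E htf _),
      Classical.skolem, funext_iff]
    rfl

theorem toSumLocCoker_surjective (hone : ∀ e ∈ E, {i | e i ≠ 1}.Finite) :
    Function.Surjective (toSumLocCoker Rf Mf E hone) := by
  classical
  rw [← LinearMap.range_eq_top, eq_top_iff]
  rintro y -
  induction y using DirectSum.induction_on with
  | zero => exact zero_mem _
  | of i q =>
    obtain ⟨z, rfl⟩ := Submodule.Quotient.mk_surjective _ q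
    induction z using LocalizedModule.induction_on with
    | h m s =>
      obtain ⟨_, e, he, rfl⟩ := s
      refine ⟨.mk (Pi.single i m) ⟨e, he⟩, DFinsupp.ext fun j => ?_⟩
      rcases eq_or_ne j i with rfl | hj
      · simp [toSumLocCoker, toLocCoker_mk]
      · simp [toSumLocCoker, toLocCoker_mk, hj, DirectSum.of_eq_of_ne]
  | add y y' hy hy' => exact add_mem hy hy'

/-- there is a short exact sequence
`0 → ∏ᵢ Mᵢ → E⁻¹(∏ᵢ Mᵢ) → ⊕ᵢ (Ēᵢ⁻¹Mᵢ)/Mᵢ → 0`; i.e. the localization map on the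
product is injective and its cokernel is isomorphic to the direct sum of the
cokernels of the componentwise localization maps. -/
theorem adelic_prod_localization_coker
    (hone : ∀ e ∈ E, {i | e i ≠ 1}.Finite)
    (htf : ∀ e ∈ E, ∀ i, Function.Injective (fun m : Mf i => e i • m)) :
    Function.Injective (LocalizedModule.mkLinearMap E (∀ i, Mf i)) ∧
    Nonempty
      ((LocalizedModule E (∀ i, Mf i) ⧸
          LinearMap.range (LocalizedModule.mkLinearMap E (∀ i, Mf i)))
        ≃ₗ[∀ j, Rf j] (⨁ i : ι, LocCoker Rf Mf E i)) := by
  refine ⟨(IsLocalizedModule.injective_iff_isRegular E _).mpr (isSMulRegular_pi Rf Mf E htf), ⟨?_⟩⟩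
  exact (Submodule.quotEquivOfEq _ _ (ker_toSumLocCoker Rf Mf E hone htf).symm).trans
    (LinearMap.quotKerEquivOfSurjective (M₂ := ⨁ i, LocCoker Rf Mf E i) _
      (toSumLocCoker_surjective Rf Mf E hone))

end
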